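/- Let X be a random variable on a finite alphabet 𝒳 with |𝒳| ≥ 2, and let x₀ ∈ 𝒳 be fixed. If H(X) ≥ h_δ + δ·log₂(|𝒳|−1) where h_δ is the binary entropy of δ ∈ (0, 1−1/|𝒳|], then P(X ≠ x₀) ≥ δ. -/

import Mathlib

/-!
Splitting off the atom `x₀`, the entropy of `X` is `-(1-p) log (1-p)` plus the contribution of
the remaining `|𝒳| - 1` atoms of total mass `p = P(X ≠ x₀)`; by concavity of `-x log x` the
latter is largest when that mass is spread uniformly, which gives Fano's bound
`H(X) ≤ h(p) + p log (|𝒳| - 1)`. The right-hand side is the `q`-ary entropy, which is strictly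
increasing on `[0, 1 - 1/|𝒳|]`, so `H(X) ≥ h(δ) + δ log (|𝒳| - 1)` forces `p ≥ δ`.
-/

open scoped Classical

/-- Distribution of a random variable `f` on a finite probability space with pmf `P`. -/
noncomputable def distOf {Ω α : Type*} [Fintype Ω] [Fintype α]
    (P : Ω → ℝ) (f : Ω → α) (a : α) : ℝ :=
  ∑ ω ∈ Finset.univ.filter (fun ω => f ω = a), P ω

/-- Shannon entropy (in bits) of a random variable `f` on a finite probability space. -/
noncomputable def entOf {Ω α : Type*} [Fintype Ω] [Fintype α]
    (P : Ω → ℝ) (f : Ω → α) : ℝ :=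
  -∑ a, distOf P f a * Real.logb 2 (distOf P f a)

open Real

lemma Real.sum_negMulLog_le_negMulLog_sum_add_mul_log_card {ι : Type*} (s : Finset ι)
    {f : ι → ℝ} (hf : ∀ i ∈ s, 0 ≤ f i) :
    ∑ i ∈ s, negMulLog (f i) ≤ negMulLog (∑ i ∈ s, f i) + (∑ i ∈ s, f i) * log s.card := by
  rcases s.eq_empty_or_nonempty with rfl | hs
  · simp
  have hn : (0 : ℝ) < s.card := by exact_mod_cast hs.card_pos
  have jensen := concaveOn_negMulLog.le_map_sum (t := s) (w := fun _ ↦ (s.card : ℝ)⁻¹)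
    (p := f) (fun _ _ ↦ by positivity) (by simp [hn.ne']) (fun i hi ↦ Set.mem_Ici.2 (hf i hi))
  simp only [smul_eq_mul, ← Finset.mul_sum] at jensen
  rw [mul_comm, negMulLog_mul, negMulLog, log_inv] at jensen
  have := mul_le_mul_of_nonneg_left jensen hn.le
  field_simp at this
  linarith

lemma Real.sum_negMulLog_le_qaryEntropy {α : Type*} [Fintype α] {q : α → ℝ}
    (hq : ∀ a, 0 ≤ q a) (hq_sum : ∑ a, q a = 1) (x₀ : α) :
    ∑ a, negMulLog (q a) ≤ qaryEntropy (Fintype.card α) (1 - q x₀) := by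
  have hx₀ := Finset.mem_univ x₀
  have hrest : ∑ a ∈ Finset.univ.erase x₀, q a = 1 - q x₀ := by
    rw [← hq_sum, ← Finset.add_sum_erase _ _ hx₀, add_sub_cancel_left]
  have hcard : (((Finset.univ.erase x₀).card : ℕ) : ℝ) = ((Fintype.card α : ℤ) - 1 : ℤ) := by
    rw [Finset.card_erase_of_mem hx₀, Finset.card_univ, Nat.cast_sub (Fintype.card_pos_iff.2 ⟨x₀⟩)]
    push_cast
    ring
  have grouping := sum_negMulLog_le_negMulLog_sum_add_mul_log_card (Finset.univ.erase x₀)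
    (fun a _ ↦ hq a)
  rw [hrest, hcard] at grouping
  rw [← Finset.add_sum_erase _ _ hx₀, qaryEntropy, binEntropy_eq_negMulLog_add_negMulLog_one_sub,
    sub_sub_cancel]
  linarith

lemma Real.qaryEntropy_div_log_two (q : ℕ) (p : ℝ) :
    qaryEntropy q p / log 2 = (-p * logb 2 p - (1 - p) * logb 2 (1 - p)) + p * logb 2 (q - 1) := by
  simp only [qaryEntropy, binEntropy, log_inv, logb]
  push_cast
  ring

section distributions

variable {Ω α : Type*} [Fintype Ω] [Fintype α] {P : Ω → ℝ}

lemma distOf_nonneg (hP : ∀ ω, 0 ≤ P ω) (f : Ω → α) (a : α) : 0 ≤ distOf P f a :=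
  Finset.sum_nonneg fun ω _ ↦ hP ω

lemma sum_distOf (P : Ω → ℝ) (f : Ω → α) : ∑ a, distOf P f a = ∑ ω, P ω :=
  Finset.sum_fiberwise_of_maps_to (fun ω _ ↦ Finset.mem_univ (f ω)) P

lemma distOf_add_sum_ne (P : Ω → ℝ) (f : Ω → α) (a : α) :
    distOf P f a + ∑ ω ∈ Finset.univ.filter (fun ω => f ω ≠ a), P ω = ∑ ω, P ω :=
  Finset.sum_filter_add_sum_filter_not _ _ _

lemma entOf_eq_sum_negMulLog_div_log_two (P : Ω → ℝ) (f : Ω → α) :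
    entOf P f = (∑ a, negMulLog (distOf P f a)) / log 2 := by
  simp only [entOf, negMulLog, logb, Finset.sum_div, ← Finset.sum_neg_distrib]
  exact Finset.sum_congr rfl fun a _ ↦ by ring

lemma entOf_le_qaryEntropy_prob_ne (hP : ∀ ω, 0 ≤ P ω) (hPsum : ∑ ω, P ω = 1)
    (f : Ω → α) (a : α) :
    entOf P f ≤
      qaryEntropy (Fintype.card α) (∑ ω ∈ Finset.univ.filter (fun ω => f ω ≠ a), P ω) / log 2 := by
  have hfano := sum_negMulLog_le_qaryEntropy (distOf_nonneg hP f) (sum_distOf P f ▸ hPsum) a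
  rw [entOf_eq_sum_negMulLog_div_log_two]
  rw [← hPsum, ← distOf_add_sum_ne P f a, add_sub_cancel_left] at hfano
  gcongr

end distributions

/-- Fano-type converse: If `|𝒳| ≥ 2`, `δ ∈ (0, 1 − 1/|𝒳|]`, and
`H(X) ≥ h(δ) + δ·log₂(|𝒳|−1)`, then `P(X ≠ x₀) ≥ δ`. -/
theorem fano_converse {Ω 𝒳 : Type*} [Fintype Ω] [Fintype 𝒳]
    (hcard : 2 ≤ Fintype.card 𝒳)
    (P : Ω → ℝ) (hP : ∀ ω, 0 ≤ P ω) (hPsum : ∑ ω, P ω = 1)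
    (X : Ω → 𝒳) (x₀ : 𝒳) (δ : ℝ) (hδ0 : 0 < δ)
    (hδ1 : δ ≤ 1 - 1 / (Fintype.card 𝒳 : ℝ))
    (hent : entOf P X ≥
      (-δ * Real.logb 2 δ - (1 - δ) * Real.logb 2 (1 - δ))
        + δ * Real.logb 2 ((Fintype.card 𝒳 : ℝ) - 1)) :
    ∑ ω ∈ Finset.univ.filter (fun ω => X ω ≠ x₀), P ω ≥ δ := by
  set p := ∑ ω ∈ Finset.univ.filter (fun ω => X ω ≠ x₀), P ω
  have hentropy : qaryEntropy (Fintype.card 𝒳) δ ≤ qaryEntropy (Fintype.card 𝒳) p := by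
    have := hent.trans (entOf_le_qaryEntropy_prob_ne hP hPsum X x₀)
    rw [← qaryEntropy_div_log_two] at this
    exact (div_le_div_iff_of_pos_right (log_pos one_lt_two)).1 this
  by_contra! hp
  have hp0 : 0 ≤ p := Finset.sum_nonneg fun ω _ ↦ hP ω
  exact (qaryEntropy_strictMonoOn hcard ⟨hp0, hp.le.trans hδ1⟩ ⟨hδ0.le, hδ1⟩ hp).not_ge hentropy
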